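/- Let s₀, y' ∈ ℝ. Then the union over α ∈ (0, e^{s₀}) of the sets {z ∈ ℍ : dist z (y' + αi) < log(e^{s₀}/α)} equals the open horodisc {z ∈ ℍ : (z.re − y')² + (z.im − (1/2)·e^{s₀})² < (1/4)·e^{2s₀}}. -/

import Mathlib

/-- The point `y' + α i` of the upper half-plane, for `α > 0`. -/
noncomputable def hpt (y' α : ℝ) (hα : 0 < α) : UpperHalfPlane :=
  ⟨(y' : ℂ) + (α : ℂ) * Complex.I, by simpa using hα⟩

/-!
Write `R = exp s₀`, `x = z.re - y'` and `v = z.im`. By the cosh formula for the hyperbolic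
distance, `z` lies in the ball about `y' + α i` of radius `log (R / α)` iff
`R (x² + v² - v R) < α² (v - R)`. These balls are Euclidean discs internally tangent to the
horocycle `x² + v² = v R` at its top point `y' + R i`, and they increase to the horodisc as
`α ↓ 0`, where the condition becomes `x² + v² < v R`.
-/

open Real Filter Topology UpperHalfPlane

theorem UpperHalfPlane.dist_lt_iff_lt_mul_cosh {z w : ℍ} {r : ℝ} (hr : 0 ≤ r) :
    dist z w < r ↔ (z.re - w.re) ^ 2 + z.im ^ 2 + w.im ^ 2 < 2 * z.im * w.im * cosh r := by
  rw [← cosh_strictMonoOn.lt_iff_lt (Set.mem_Ici.2 dist_nonneg) hr, cosh_dist',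
    div_lt_iff₀ (by have := z.im_pos; have := w.im_pos; positivity), mul_comm]

@[simp] lemma hpt_re (y' α : ℝ) (hα : 0 < α) : (hpt y' α hα).re = y' := by
  simp [hpt, UpperHalfPlane.re]

@[simp] lemma hpt_im (y' α : ℝ) (hα : 0 < α) : (hpt y' α hα).im = α := by
  simp [hpt, UpperHalfPlane.im]

lemma mul_cosh_log_div {R α : ℝ} (hR : 0 < R) (hα : 0 < α) :
    α * cosh (log (R / α)) = (R ^ 2 + α ^ 2) / (2 * R) := by
  rw [cosh_log (by positivity)]
  field_simp

lemma dist_hpt_lt_log_div_iff {R α : ℝ} (y' : ℝ) (hα : 0 < α) (hαR : α < R) (z : ℍ) :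
    dist z (hpt y' α hα) < log (R / α) ↔
      R * ((z.re - y') ^ 2 + z.im ^ 2 + α ^ 2) < z.im * (R ^ 2 + α ^ 2) := by
  have hR : 0 < R := hα.trans hαR
  rw [dist_lt_iff_lt_mul_cosh (log_nonneg ((one_le_div hα).2 hαR.le)), hpt_re, hpt_im,
    mul_assoc, mul_cosh_log_div hR hα,
    show 2 * z.im * ((R ^ 2 + α ^ 2) / (2 * R)) = z.im * (R ^ 2 + α ^ 2) / R by field_simp,
    lt_div_iff₀ hR, mul_comm]

lemma exists_lt_and_mul_lt_mul_iff {R x v : ℝ} (hR : 0 < R) :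
    (∃ α, 0 < α ∧ α < R ∧ R * (x ^ 2 + v ^ 2 + α ^ 2) < v * (R ^ 2 + α ^ 2)) ↔
      x ^ 2 + v ^ 2 < v * R := by
  constructor
  · rintro ⟨α, hα, hαR, h⟩
    rcases le_or_gt v R with hvR | hRv
    · nlinarith [mul_nonneg (sq_nonneg α) (sub_nonneg.2 hvR)]
    -- `α² (v - R) < R² (v - R) < R v (v - R) ≤ R (x² + v² - v R)`
    · nlinarith [mul_lt_mul_of_pos_right (pow_lt_pow_left₀ hαR hα.le two_ne_zero) (sub_pos.2 hRv),
        mul_pos hR (mul_pos (sub_pos.2 hRv) (sub_pos.2 hRv)), mul_nonneg hR.le (sq_nonneg x)]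
  · intro h
    have hd : 0 < R * (v * R - x ^ 2 - v ^ 2) := by nlinarith
    have hsmall : ∀ᶠ α in 𝓝 (0 : ℝ), α < R ∧ α ^ 2 * (R - v) < R * (v * R - x ^ 2 - v ^ 2) :=
      (gt_mem_nhds hR).and <| (continuous_pow 2 |>.mul continuous_const).tendsto' 0 0 (by simp)
        |>.eventually (gt_mem_nhds hd)
    obtain ⟨α, ⟨hαR, hα2⟩, hα⟩ :=
      ((hsmall.filter_mono nhdsWithin_le_nhds).and (self_mem_nhdsWithin (s := Set.Ioi 0))).exists
    exact ⟨α, hα, hαR, by linarith⟩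

/-- The union over `α ∈ (0, exp s₀)` of the hyperbolic balls of radius `log (exp s₀ / α)`
centered at height `α` over the boundary point `y'` is the open horodisc of Euclidean
radius `(1/2) exp s₀` tangent to the real axis at `y'`. -/
theorem stmt_3 (s₀ y' : ℝ) :
    (⋃ (α : ℝ) (hα : 0 < α) (_ : α < Real.exp s₀),
        {z : UpperHalfPlane | dist z (hpt y' α hα) < Real.log (Real.exp s₀ / α)}) =
    {z : UpperHalfPlane |
      (z.re - y') ^ 2 + (z.im - (1 / 2) * Real.exp s₀) ^ 2 < (1 / 4) * Real.exp (2 * s₀)} := by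
  ext z
  have hexp : exp (2 * s₀) = exp s₀ ^ 2 := by rw [← exp_nat_mul, Nat.cast_ofNat]
  calc z ∈ ⋃ (α : ℝ) (hα : 0 < α) (_ : α < exp s₀), {z | dist z (hpt y' α hα) < log (exp s₀ / α)}
      ↔ ∃ α, 0 < α ∧ α < exp s₀ ∧
          exp s₀ * ((z.re - y') ^ 2 + z.im ^ 2 + α ^ 2) < z.im * (exp s₀ ^ 2 + α ^ 2) := by
        simp only [Set.mem_iUnion, Set.mem_ofPred_eq]
        exact exists_congr fun α ↦
          ⟨fun ⟨hα, hαR, h⟩ ↦ ⟨hα, hαR, (dist_hpt_lt_log_div_iff y' hα hαR z).1 h⟩,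
            fun ⟨hα, hαR, h⟩ ↦ ⟨hα, hαR, (dist_hpt_lt_log_div_iff y' hα hαR z).2 h⟩⟩
    _ ↔ (z.re - y') ^ 2 + z.im ^ 2 < z.im * exp s₀ := exists_lt_and_mul_lt_mul_iff (exp_pos s₀)
    _ ↔ _ := by
        rw [Set.mem_ofPred_eq, hexp]
        constructor <;> intro h <;> linarith
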